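/- Let A be an n×n strict contraction with singular values r_1 ≥ … ≥ r_n. Then for each j = 1,…,n, λ_j((I−A*)⁻¹(I−A*A)(I−A)⁻¹) ≥ (1−r_{n−j+1}²)/(1+r_1)². -/

import Mathlib

open Matrix
open scoped ComplexOrder

noncomputable def eigDesc {n : ℕ} {A : Matrix (Fin n) (Fin n) ℂ} (hA : A.IsHermitian)
    (j : Fin n) : ℝ :=
  (hA.eigenvalues ∘ Tuple.sort hA.eigenvalues) j.rev

noncomputable def singVal {n : ℕ} (A : Matrix (Fin n) (Fin n) ℂ) (j : Fin n) : ℝ :=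
  Real.sqrt (eigDesc ((Matrix.posSemidef_conjTranspose_mul_self A).isHermitian) j)

noncomputable def hermPart {n : ℕ} (X : Matrix (Fin n) (Fin n) ℂ) :
    Matrix (Fin n) (Fin n) ℂ :=
  (1/2 : ℂ) • (X + Xᴴ)

lemma hermPart_isHermitian {n : ℕ} (X : Matrix (Fin n) (Fin n) ℂ) :
    (hermPart X).IsHermitian := by
  unfold hermPart
  simp [Matrix.IsHermitian, Matrix.conjTranspose_smul, Matrix.conjTranspose_add, add_comm]

/-!
Substituting `x = (1 - A) y` turns the quadratic form of `M = (1 - A*)⁻¹ (1 - A*A) (1 - A)⁻¹`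
into `⟪x, M x⟫ = ‖y‖² - ‖A y‖²`. On the span of the right singular vectors belonging to the `j`
smallest singular values `r_{n-j+1}, …, r_n` this is at least `(1 - r_{n-j+1}²) ‖y‖²`, while
`‖x‖ ≤ (1 + r_1) ‖y‖` everywhere. The image of that span under the invertible `1 - A` is again
`j`-dimensional, so the Courant–Fischer principle bounds `λ_j` from below by the ratio.
-/

open scoped InnerProductSpace

section CourantFischer

variable {n : ℕ} {Z : Matrix (Fin n) (Fin n) ℂ}

noncomputable def eigDescBasis (hZ : Z.IsHermitian) :
    OrthonormalBasis (Fin n) ℂ (EuclideanSpace ℂ (Fin n)) :=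
  hZ.eigenvectorBasis.reindex (Fin.revPerm.trans (Tuple.sort hZ.eigenvalues)).symm

lemma toEuclideanLin_eigDescBasis (hZ : Z.IsHermitian) (i : Fin n) :
    Z.toEuclideanLin (eigDescBasis hZ i) = (eigDesc hZ i : ℂ) • eigDescBasis hZ i := by
  have h := hZ.mulVec_eigenvectorBasis (Tuple.sort hZ.eigenvalues i.rev)
  ext k
  simpa [eigDescBasis, eigDesc, toLpLin_apply] using congrFun h k

lemma eigDesc_antitone (hZ : Z.IsHermitian) : Antitone (eigDesc hZ) :=
  fun _ _ h => Tuple.monotone_sort hZ.eigenvalues (Fin.rev_le_rev.mpr h)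

lemma re_inner_toEuclideanLin_eq_sum (hZ : Z.IsHermitian) (x : EuclideanSpace ℂ (Fin n)) :
    RCLike.re ⟪x, Z.toEuclideanLin x⟫_ℂ =
      ∑ i, eigDesc hZ i * ‖(eigDescBasis hZ).repr x i‖ ^ 2 := by
  set b := eigDescBasis hZ
  have hrepr : ∀ i, b.repr (Z.toEuclideanLin x) i = eigDesc hZ i * b.repr x i := by
    intro i
    rw [b.repr_apply_apply, ← (isSymmetric_toEuclideanLin_iff.mpr hZ) (b i),
      toEuclideanLin_eigDescBasis, inner_smul_left, Complex.conj_ofReal, b.repr_apply_apply]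
  rw [← b.repr.inner_map_map, PiLp.inner_apply, RCLike.re_to_complex, Complex.re_sum]
  refine Finset.sum_congr rfl fun i _ => ?_
  rw [hrepr, RCLike.inner_apply, mul_assoc, Complex.mul_conj', ← Complex.ofReal_pow,
    ← Complex.ofReal_mul, Complex.ofReal_re]

lemma re_inner_toEuclideanLin_le_of_mem_span (hZ : Z.IsHermitian) (k : Fin n)
    {x : EuclideanSpace ℂ (Fin n)} (hx : x ∈ Submodule.span ℂ (eigDescBasis hZ '' Set.Ici k)) :
    RCLike.re ⟪x, Z.toEuclideanLin x⟫_ℂ ≤ eigDesc hZ k * ‖x‖ ^ 2 := by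
  rw [← (eigDescBasis hZ).coe_toBasis, Module.Basis.mem_span_image] at hx
  rw [re_inner_toEuclideanLin_eq_sum hZ, ← (eigDescBasis hZ).repr.norm_map,
    EuclideanSpace.norm_sq_eq, Finset.mul_sum]
  refine Finset.sum_le_sum fun i _ => ?_
  by_cases hi : k ≤ i
  · exact mul_le_mul_of_nonneg_right (eigDesc_antitone hZ hi) (sq_nonneg _)
  · have : (eigDescBasis hZ).repr x i = 0 := by
      rw [← (eigDescBasis hZ).coe_toBasis_repr_apply, ← Finsupp.notMem_support_iff]
      exact mt (@hx i) hi
    simp [this]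

lemma finrank_span_eigDescBasis_Ici (hZ : Z.IsHermitian) (k : Fin n) :
    Module.finrank ℂ (Submodule.span ℂ (eigDescBasis hZ '' Set.Ici k)) = n - k := by
  rw [Set.image_eq_range, finrank_span_eq_card]
  · simp
  · exact (eigDescBasis hZ).orthonormal.linearIndependent.comp _ Subtype.val_injective

lemma le_eigDesc_of_finrank_eq (hZ : Z.IsHermitian) (j : Fin n)
    {W : Submodule ℂ (EuclideanSpace ℂ (Fin n))} (hW : Module.finrank ℂ W = j + 1) {c : ℝ}
    (hc : ∀ x ∈ W, c * ‖x‖ ^ 2 ≤ RCLike.re ⟪x, Z.toEuclideanLin x⟫_ℂ) :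
    c ≤ eigDesc hZ j := by
  set T := Submodule.span ℂ (eigDescBasis hZ '' Set.Ici j)
  have hdim := Submodule.finrank_sup_add_finrank_inf_eq W T
  have hsup : Module.finrank ℂ ↥(W ⊔ T) ≤ n := by
    simpa using Submodule.finrank_le (W ⊔ T)
  have hT : Module.finrank ℂ T = n - j := finrank_span_eigDescBasis_Ici hZ j
  have hj := j.isLt
  obtain ⟨x, ⟨hxW, hxT⟩, hx⟩ : ∃ x ∈ W ⊓ T, x ≠ 0 := by
    refine Submodule.exists_mem_ne_zero_of_ne_bot fun h => ?_
    rw [h, finrank_bot] at hdim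
    omega
  have hx2 : 0 < ‖x‖ ^ 2 := by positivity
  exact le_of_mul_le_mul_right
    ((hc x hxW).trans (re_inner_toEuclideanLin_le_of_mem_span hZ j hxT)) hx2

end CourantFischer

lemma toEuclideanLin_injective_of_isUnit_det {ι 𝕜 : Type*} [RCLike 𝕜] [Fintype ι]
    [DecidableEq ι] {P : Matrix ι ι 𝕜} (hP : IsUnit P.det) : Function.Injective P.toEuclideanLin :=
  fun _ _ h => WithLp.ofLp_injective 2 <|
    mulVec_injective_of_isUnit ((isUnit_iff_isUnit_det P).mpr hP) (congrArg WithLp.ofLp h)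

lemma inner_toEuclideanLin_conjTranspose_inv_mul_mul_inv {ι 𝕜 : Type*} [RCLike 𝕜] [Fintype ι]
    [DecidableEq ι] {P : Matrix ι ι 𝕜} (hP : IsUnit P.det) (Q : Matrix ι ι 𝕜)
    (y : EuclideanSpace 𝕜 ι) :
    ⟪P.toEuclideanLin y, (Pᴴ⁻¹ * Q * P⁻¹).toEuclideanLin (P.toEuclideanLin y)⟫_𝕜 =
      ⟪y, Q.toEuclideanLin y⟫_𝕜 := by
  have hcancel : Pᴴ⁻¹ * Q * P⁻¹ * P = (P⁻¹)ᴴ * Q := by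
    rw [mul_assoc, nonsing_inv_mul _ hP, mul_one, conjTranspose_nonsing_inv]
  rw [← LinearMap.comp_apply, ← toLpLin_mul_same, hcancel, toLpLin_mul_same,
    LinearMap.comp_apply, toEuclideanLin_conjTranspose_eq_adjoint,
    LinearMap.adjoint_inner_right, ← LinearMap.comp_apply, ← toLpLin_mul_same,
    nonsing_inv_mul _ hP, toLpLin_one, LinearMap.id_apply]

section SingularValues

variable {n : ℕ} (A : Matrix (Fin n) (Fin n) ℂ)

lemma singVal_nonneg (k : Fin n) : 0 ≤ singVal A k :=
  Real.sqrt_nonneg _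

lemma singVal_sq (k : Fin n) :
    singVal A k ^ 2 = eigDesc (posSemidef_conjTranspose_mul_self A).isHermitian k :=
  Real.sq_sqrt ((posSemidef_conjTranspose_mul_self A).eigenvalues_nonneg _)

lemma re_inner_toEuclideanLin_conjTranspose_mul_self (y : EuclideanSpace ℂ (Fin n)) :
    RCLike.re ⟪y, (Aᴴ * A).toEuclideanLin y⟫_ℂ = ‖A.toEuclideanLin y‖ ^ 2 := by
  rw [toLpLin_mul_same, LinearMap.comp_apply, toEuclideanLin_conjTranspose_eq_adjoint,
    LinearMap.adjoint_inner_right, inner_self_eq_norm_sq]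

lemma norm_toEuclideanLin_le_singVal_mul_of_mem_span (k : Fin n) {y : EuclideanSpace ℂ (Fin n)}
    (hy : y ∈ Submodule.span ℂ
      (eigDescBasis (posSemidef_conjTranspose_mul_self A).isHermitian '' Set.Ici k)) :
    ‖A.toEuclideanLin y‖ ≤ singVal A k * ‖y‖ := by
  have h := re_inner_toEuclideanLin_le_of_mem_span _ k hy
  rw [re_inner_toEuclideanLin_conjTranspose_mul_self, ← singVal_sq] at h
  exact le_of_sq_le_sq (by linarith) (mul_nonneg (singVal_nonneg A k) (norm_nonneg y))

lemma norm_toEuclideanLin_le_singVal_zero_mul (hn : 0 < n) (y : EuclideanSpace ℂ (Fin n)) :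
    ‖A.toEuclideanLin y‖ ≤ singVal A ⟨0, hn⟩ * ‖y‖ := by
  refine norm_toEuclideanLin_le_singVal_mul_of_mem_span A _ ?_
  have hIci : Set.Ici (⟨0, hn⟩ : Fin n) = Set.univ :=
    Set.eq_univ_of_forall fun i => Fin.mk_le_of_le_val (Nat.zero_le i.val)
  rw [hIci, Set.image_univ, ← OrthonormalBasis.coe_toBasis, Module.Basis.span_eq]
  trivial

lemma isUnit_det_one_sub_of_singVal_lt_one (hn : 0 < n) (hA : singVal A ⟨0, hn⟩ < 1) :
    IsUnit (1 - A).det := by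
  rw [isUnit_iff_ne_zero, Ne, ← exists_mulVec_eq_zero_iff]
  rintro ⟨v, hv, hAv⟩
  rw [sub_mulVec, one_mulVec, sub_eq_zero] at hAv
  have hfix : A.toEuclideanLin (WithLp.toLp 2 v) = WithLp.toLp 2 v := by
    rw [toLpLin_apply, ← hAv]
  have hpos : 0 < ‖WithLp.toLp 2 v‖ := by simpa using hv
  have := norm_toEuclideanLin_le_singVal_zero_mul A hn (WithLp.toLp 2 v)
  rw [hfix] at this
  nlinarith

lemma norm_toEuclideanLin_one_sub_le (hn : 0 < n) (y : EuclideanSpace ℂ (Fin n)) :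
    ‖(1 - A).toEuclideanLin y‖ ≤ (1 + singVal A ⟨0, hn⟩) * ‖y‖ := by
  rw [map_sub, LinearMap.sub_apply, toLpLin_one, LinearMap.id_apply]
  linarith [norm_sub_le y (A.toEuclideanLin y), norm_toEuclideanLin_le_singVal_zero_mul A hn y]

lemma re_inner_toEuclideanLin_one_sub (hA : IsUnit (1 - A).det) (y : EuclideanSpace ℂ (Fin n)) :
    RCLike.re ⟪(1 - A).toEuclideanLin y,
      ((1 - Aᴴ)⁻¹ * (1 - Aᴴ * A) * (1 - A)⁻¹).toEuclideanLin ((1 - A).toEuclideanLin y)⟫_ℂ =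
      ‖y‖ ^ 2 - ‖A.toEuclideanLin y‖ ^ 2 := by
  rw [← conjTranspose_one, ← conjTranspose_sub, conjTranspose_one,
    inner_toEuclideanLin_conjTranspose_inv_mul_mul_inv hA, map_sub, LinearMap.sub_apply,
    inner_sub_right, map_sub, toLpLin_one, LinearMap.id_apply, inner_self_eq_norm_sq,
    re_inner_toEuclideanLin_conjTranspose_mul_self]

end SingularValues

theorem stmt14 {n : ℕ} (A : Matrix (Fin n) (Fin n) ℂ) (hA : ∀ j, singVal A j < 1)
    (hM : ((1 - Aᴴ)⁻¹ * (1 - Aᴴ * A) * (1 - A)⁻¹).IsHermitian) (j : Fin n) :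
    eigDesc hM j ≥ (1 - singVal A j.rev ^ 2) / (1 + singVal A ⟨0, j.pos⟩) ^ 2 := by
  set r := singVal A ⟨0, j.pos⟩
  set s := singVal A j.rev
  have hdet := isUnit_det_one_sub_of_singVal_lt_one A j.pos (hA _)
  set S := Submodule.span ℂ
    (eigDescBasis (posSemidef_conjTranspose_mul_self A).isHermitian '' Set.Ici j.rev)
  have hW : Module.finrank ℂ (S.map (1 - A).toEuclideanLin) = j + 1 := by
    rw [← (S.equivMapOfInjective _ (toEuclideanLin_injective_of_isUnit_det hdet)).finrank_eq,
      finrank_span_eigDescBasis_Ici, Fin.val_rev]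
    omega
  refine le_eigDesc_of_finrank_eq hM j hW ?_
  rintro _ ⟨y, hyS, rfl⟩
  have hAy := norm_toEuclideanLin_le_singVal_mul_of_mem_span A j.rev hyS
  have hr : 0 < 1 + r := by linarith [singVal_nonneg A ⟨0, j.pos⟩]
  have hs : 0 ≤ 1 - s ^ 2 := by nlinarith [singVal_nonneg A j.rev, hA j.rev]
  calc (1 - s ^ 2) / (1 + r) ^ 2 * ‖(1 - A).toEuclideanLin y‖ ^ 2
      ≤ (1 - s ^ 2) / (1 + r) ^ 2 * ((1 + r) * ‖y‖) ^ 2 := by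
        gcongr
        exact norm_toEuclideanLin_one_sub_le A j.pos y
    _ = (1 - s ^ 2) * ‖y‖ ^ 2 := by field_simp
    _ ≤ ‖y‖ ^ 2 - ‖A.toEuclideanLin y‖ ^ 2 := by nlinarith [norm_nonneg (A.toEuclideanLin y)]
    _ = _ := (re_inner_toEuclideanLin_one_sub A hdet y).symm
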